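/- arXiv:2510.08749 — 2 statements merged into one kernel-verified Lean document; each statement's English description precedes it below -/
import Mathlib

section
/- Let $y_1 < \cdots < y_k$ be real numbers, let $Y$ take value $y_i$ with probability $p_i \in (0,1)$, $\sum_i p_i = 1$, and let $\tau \sim \mathrm{Unif}(0,1)$ be independent of $Y$. Fix weights $\alpha_i \in (0,1)$ with $\sum_{i=1}^k \alpha_i = 1$, and define $P = \sum_{i=1}^k \alpha_i \mathbf{1}(y_i > Y) + \tau \sum_{i=1}^k \alpha_i \mathbf{1}(y_i = Y)$. Let $F$ be the CDF of $P$ and $F_0(t) = \min(\max(t,0),1)$ the CDF of $\mathrm{Unif}(0,1)$. Then $\sup_{\epsilon \in \mathbb{R}} |F(\epsilon) - F_0(\epsilon)| = \max_{1 \le i \le k} \left| \sum_{j=1}^i (p_j - \alpha_j) \right|$. -/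
/-!
On the event `Y = y i` the rank equals `B i + α i * τ` with `B i = ∑ j > i, α j`, so it is uniform
on `[B i, B i + α i]`. Writing `G i` for that uniform CDF, `F = ∑ i, p i * G i`, and telescoping
gives `F₀ = ∑ i, α i * G i`. For fixed `t`, `G i t` is nondecreasing in `i` with values in `[0, 1]`,
so Abel summation bounds `|F t - F₀ t| = |∑ i, (p i - α i) * G i t|` by the largest partial sum
`|∑ j ≤ i, (p j - α j)|`. At `t = B i` one has `G j t = 0` for `j ≤ i` and `G j t = 1` for `j > i`,
so there `F t - F₀ t` is exactly minus the `i`-th partial sum.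
-/

open MeasureTheory ProbabilityTheory Set Finset

noncomputable def uniformCDF (c w t : ℝ) : ℝ := min (max ((t - c) / w) 0) 1

section uniformCDF

variable {c w t : ℝ}

lemma uniformCDF_nonneg : 0 ≤ uniformCDF c w t := le_min (le_max_right _ _) zero_le_one

lemma uniformCDF_le_one : uniformCDF c w t ≤ 1 := min_le_right _ _

lemma uniformCDF_eq_zero (hw : 0 ≤ w) (ht : t ≤ c) : uniformCDF c w t = 0 := by
  rw [uniformCDF, max_eq_right (div_nonpos_of_nonpos_of_nonneg (by linarith) hw)]
  exact min_eq_left zero_le_one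

lemma uniformCDF_eq_one (hw : 0 < w) (ht : c + w ≤ t) : uniformCDF c w t = 1 :=
  min_eq_right <| le_max_of_le_left <| (one_le_div hw).2 (by linarith)

lemma mul_uniformCDF (hw : 0 < w) : w * uniformCDF c w t = min t (c + w) - min t c := by
  rw [uniformCDF, mul_min_of_nonneg _ _ hw.le, mul_max_of_nonneg _ _ hw.le,
    mul_div_cancel₀ _ hw.ne', mul_zero, mul_one]
  simp only [min_def, max_def]
  split_ifs <;> linarith

end uniformCDF

lemma abs_sum_mul_le_of_monotone {d g : ℕ → ℝ} {n : ℕ} {M : ℝ} (hn : 0 < n)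
    (hd : ∑ m ∈ range n, d m = 0) (hg : ∀ m, m + 1 < n → g m ≤ g (m + 1))
    (hg0 : 0 ≤ g 0) (hg1 : g (n - 1) ≤ 1) (hM : ∀ m < n, |∑ j ∈ range (m + 1), d j| ≤ M) :
    |∑ m ∈ range n, d m * g m| ≤ M := by
  have hM0 : 0 ≤ M := (abs_nonneg _).trans (hM 0 hn)
  have hparts := sum_range_by_parts g d n
  simp only [smul_eq_mul, hd, mul_zero, zero_sub] at hparts
  calc |∑ m ∈ range n, d m * g m|
      = |∑ m ∈ range (n - 1), (g (m + 1) - g m) * ∑ j ∈ range (m + 1), d j| := by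
        simp only [mul_comm (d _), hparts, abs_neg]
    _ ≤ ∑ m ∈ range (n - 1), (g (m + 1) - g m) * M := by
        refine (abs_sum_le_sum_abs _ _).trans (sum_le_sum fun m hm => ?_)
        have hm : m + 1 < n := by have := mem_range.1 hm; omega
        rw [abs_mul, abs_of_nonneg (sub_nonneg.2 (hg m hm))]
        exact mul_le_mul_of_nonneg_left (hM _ (by omega)) (sub_nonneg.2 (hg m hm))
    _ = (g (n - 1) - g 0) * M := by rw [← sum_mul, sum_range_sub (fun m => g m)]
    _ ≤ M := mul_le_of_le_one_left hM0 (by linarith)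

-- Atoms are indexed by `ℕ` here (weights extended by zero), so that telescoping and Abel
-- summation over `range n` are available.
noncomputable def massFrom (a : ℕ → ℝ) (n m : ℕ) : ℝ := ∑ j ∈ Ico m n, a j

noncomputable def blockCDF (a : ℕ → ℝ) (n m : ℕ) (t : ℝ) : ℝ :=
  uniformCDF (massFrom a n (m + 1)) (a m) t

section blocks

variable {a : ℕ → ℝ} {n : ℕ}

lemma massFrom_eq_add {m : ℕ} (hm : m < n) : massFrom a n m = massFrom a n (m + 1) + a m := by
  rw [massFrom, sum_eq_sum_Ico_succ_bot hm, add_comm, massFrom]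

lemma massFrom_antitone (ha : ∀ m < n, 0 < a m) : Antitone (massFrom a n) := fun _ _ h =>
  sum_le_sum_of_subset_of_nonneg (Ico_subset_Ico_left h) fun j hj _ =>
    (ha j (mem_Ico.1 hj).2).le

lemma mul_blockCDF (ha : ∀ m < n, 0 < a m) {m : ℕ} (hm : m < n) (t : ℝ) :
    a m * blockCDF a n m t = min t (massFrom a n m) - min t (massFrom a n (m + 1)) := by
  rw [blockCDF, mul_uniformCDF (ha m hm), massFrom_eq_add hm]

lemma sum_mul_blockCDF (ha : ∀ m < n, 0 < a m) (hsum : ∑ m ∈ range n, a m = 1) (t : ℝ) :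
    ∑ m ∈ range n, a m * blockCDF a n m t = min (max t 0) 1 := by
  have h0 : massFrom a n 0 = 1 := by rw [massFrom, ← range_eq_Ico, hsum]
  have hn : massFrom a n n = 0 := by rw [massFrom, Ico_self, sum_empty]
  rw [sum_congr rfl fun m hm => mul_blockCDF ha (mem_range.1 hm) t, sum_range_sub', h0, hn]
  simp only [min_def, max_def]
  split_ifs <;> linarith

lemma blockCDF_le_succ (ha : ∀ m < n, 0 < a m) {m : ℕ} (hm : m + 1 < n) (t : ℝ) :
    blockCDF a n m t ≤ blockCDF a n (m + 1) t := by
  rcases le_or_gt t (massFrom a n (m + 1)) with h | h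
  · rw [blockCDF, uniformCDF_eq_zero (ha m (by omega)).le h]
    exact uniformCDF_nonneg
  · rw [blockCDF, blockCDF, uniformCDF_eq_one (ha _ hm) (by rw [← massFrom_eq_add hm]; exact h.le)]
    exact uniformCDF_le_one

lemma blockCDF_massFrom_of_le (ha : ∀ m < n, 0 < a m) {i m : ℕ} (hmi : m ≤ i) (hi : i < n) :
    blockCDF a n m (massFrom a n (i + 1)) = 0 :=
  uniformCDF_eq_zero (ha m (by omega)).le (massFrom_antitone ha (by omega))

lemma blockCDF_massFrom_of_lt (ha : ∀ m < n, 0 < a m) {i m : ℕ} (him : i < m) (hm : m < n) :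
    blockCDF a n m (massFrom a n (i + 1)) = 1 :=
  uniformCDF_eq_one (ha m hm) <| (massFrom_eq_add hm).symm.le.trans (massFrom_antitone ha him)

lemma abs_sum_mul_blockCDF_le (ha : ∀ m < n, 0 < a m) (hn : 0 < n) {d : ℕ → ℝ} {M : ℝ}
    (hd : ∑ m ∈ range n, d m = 0) (hM : ∀ m < n, |∑ j ∈ range (m + 1), d j| ≤ M) (t : ℝ) :
    |∑ m ∈ range n, d m * blockCDF a n m t| ≤ M :=
  abs_sum_mul_le_of_monotone hn hd (fun _ hm => blockCDF_le_succ ha hm t) uniformCDF_nonneg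
    uniformCDF_le_one hM

lemma sum_mul_blockCDF_massFrom (ha : ∀ m < n, 0 < a m) {d : ℕ → ℝ}
    (hd : ∑ m ∈ range n, d m = 0) {i : ℕ} (hi : i < n) :
    ∑ m ∈ range n, d m * blockCDF a n m (massFrom a n (i + 1)) = -∑ j ∈ range (i + 1), d j := by
  have hin : i + 1 ≤ n := hi
  rw [← sum_range_add_sum_Ico d hin] at hd
  rw [← sum_range_add_sum_Ico _ hin,
    sum_eq_zero fun m hm => by
      rw [blockCDF_massFrom_of_le ha (Nat.lt_succ_iff.1 (mem_range.1 hm)) hi, mul_zero],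
    sum_congr rfl fun m hm => by
      rw [blockCDF_massFrom_of_lt ha (mem_Ico.1 hm).1 (mem_Ico.1 hm).2, mul_one]]
  linarith

end blocks

section rank

variable {Ω : Type*} [MeasurableSpace Ω] {μ : Measure Ω} {Y τ : Ω → ℝ}

lemma toReal_measure_preimage_Iic_of_map_eq (hτ : Measurable τ)
    (hτlaw : μ.map τ = volume.restrict (Ioo (0 : ℝ) 1)) (c : ℝ) :
    (μ (τ ⁻¹' Iic c)).toReal = min (max c 0) 1 := by
  rw [← Measure.map_apply hτ measurableSet_Iic, hτlaw, Measure.restrict_congr_set Ioo_ae_eq_Ioc,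
    Measure.restrict_apply measurableSet_Iic, inter_comm, Ioc_inter_Iic, Real.volume_Ioc,
    ENNReal.toReal_ofReal', sub_zero]
  simp only [min_def, max_def]
  split_ifs <;> linarith

lemma toReal_measure_le_eq_sum_uniformCDF [IsFiniteMeasure μ] {ι : Type*} [Fintype ι]
    (hY : Measurable Y) (hτ : Measurable τ) (hτlaw : μ.map τ = volume.restrict (Ioo (0 : ℝ) 1))
    (hindep : IndepFun Y τ μ) {y : ι → ℝ} (hy : Function.Injective y)
    (hYsupp : μ {ω | ∀ i, Y ω ≠ y i} = 0) {b w : ι → ℝ} (hw : ∀ i, 0 < w i) {X : Ω → ℝ}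
    (hX : ∀ i ω, Y ω = y i → X ω = b i + w i * τ ω) (t : ℝ) :
    (μ {ω | X ω ≤ t}).toReal = ∑ i, (μ {ω | Y ω = y i}).toReal * uniformCDF (b i) (w i) t := by
  set S : ι → Set Ω := fun i => Y ⁻¹' {y i} ∩ τ ⁻¹' Iic ((t - b i) / w i)
  have hS : ∀ i, MeasurableSet (S i) :=
    fun i => (hY (measurableSet_singleton _)).inter (hτ measurableSet_Iic)
  have hdisj : Pairwise (Function.onFun Disjoint S) := fun i j hij =>
    disjoint_left.2 fun ω hi hj => hij (hy (hi.1.symm.trans hj.1))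
  have hae : {ω | X ω ≤ t} =ᵐ[μ] ⋃ i, S i := by
    have hatoms : ∀ᵐ ω ∂μ, ∃ i, Y ω = y i := by
      simpa only [ae_iff, not_exists] using hYsupp
    refine Filter.eventuallyEq_set.2 (hatoms.mono fun ω ⟨i, hi⟩ => ?_)
    simp only [S, mem_ofPred_eq, mem_iUnion, mem_inter_iff, Set.mem_preimage,
      mem_singleton_iff, Set.mem_Iic, le_div_iff₀ (hw _)]
    constructor
    · intro h
      exact ⟨i, hi, by rw [hX i ω hi] at h; linarith⟩
    · rintro ⟨j, hj, h⟩
      rw [hX j ω hj]; linarith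
  rw [measure_congr hae, measure_iUnion hdisj hS, tsum_fintype,
    ENNReal.toReal_sum fun i _ => measure_ne_top μ _]
  refine Finset.sum_congr rfl fun i _ => ?_
  rw [hindep.measure_inter_preimage_eq_mul _ _ (measurableSet_singleton _) measurableSet_Iic,
    ENNReal.toReal_mul, toReal_measure_preimage_Iic_of_map_eq hτ hτlaw]
  rfl

end rank

section extendVal

variable {k : ℕ}

lemma sum_map_valEmbedding_extend {M : Type*} [AddCommMonoid M] (f : Fin k → M)
    (s : Finset (Fin k)) :
    ∑ m ∈ s.map Fin.valEmbedding, Function.extend Fin.val f 0 m = ∑ j ∈ s, f j := by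
  rw [sum_map]
  exact sum_congr rfl fun j _ => Fin.val_injective.extend_apply f 0 j

lemma sum_range_extend_val {M : Type*} [AddCommMonoid M] (f : Fin k → M) :
    ∑ m ∈ range k, Function.extend Fin.val f 0 m = ∑ i, f i := by
  rw [← Nat.Iio_eq_range, ← Fin.map_valEmbedding_univ, sum_map_valEmbedding_extend]

lemma sum_range_succ_extend_val {M : Type*} [AddCommMonoid M] (f : Fin k → M) (i : Fin k) :
    ∑ m ∈ range (i + 1), Function.extend Fin.val f 0 m = ∑ j ∈ Iic i, f j := by
  rw [Nat.range_succ_eq_Iic, ← Fin.map_valEmbedding_Iic, sum_map_valEmbedding_extend]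

lemma sum_range_extend_val_mul {R : Type*} [NonUnitalNonAssocSemiring R] (f : Fin k → R)
    (g : ℕ → R) :
    ∑ m ∈ range k, Function.extend Fin.val f 0 m * g m = ∑ i, f i * g i := by
  rw [← Fin.sum_univ_eq_sum_range]
  exact sum_congr rfl fun i _ => by rw [Fin.val_injective.extend_apply]

lemma sum_Ioi_eq_massFrom_extend_val (α : Fin k → ℝ) (i : Fin k) :
    ∑ j ∈ Ioi i, α j = massFrom (Function.extend Fin.val α 0) k (i + 1) := by
  rw [massFrom, Finset.Ico_add_one_left_eq_Ioo, ← Fin.map_valEmbedding_Ioi,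
    sum_map_valEmbedding_extend]

end extendVal

noncomputable def weightedRank {k : ℕ} (α y : Fin k → ℝ) (s v : ℝ) : ℝ :=
  (∑ i, α i * (if y i > v then 1 else 0)) + s * (∑ i, α i * (if y i = v then 1 else 0))

section weightedRank

variable {k : ℕ}

lemma weightedRank_apply_atom {y : Fin k → ℝ} (hy : StrictMono y) (α : Fin k → ℝ) (i : Fin k)
    (s : ℝ) : weightedRank α y s (y i) = ∑ j ∈ Ioi i, α j + α i * s := by
  simp only [weightedRank, gt_iff_lt, hy.lt_iff_lt, hy.injective.eq_iff, mul_ite, mul_one,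
    mul_zero, ← sum_filter, filter_lt_eq_Ioi, filter_eq', Finset.mem_univ, if_true,
    Finset.sum_singleton]
  ring

lemma toReal_measure_weightedRank_le {Ω : Type*} [MeasurableSpace Ω] {μ : Measure Ω}
    [IsFiniteMeasure μ] {Y τ : Ω → ℝ} (hY : Measurable Y) (hτ : Measurable τ)
    (hτlaw : μ.map τ = volume.restrict (Ioo (0 : ℝ) 1)) (hindep : IndepFun Y τ μ)
    {y : Fin k → ℝ} (hy : StrictMono y) (hYsupp : μ {ω | ∀ i, Y ω ≠ y i} = 0)
    {α : Fin k → ℝ} (hα : ∀ i, 0 < α i) (t : ℝ) :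
    (μ {ω | weightedRank α y (τ ω) (Y ω) ≤ t}).toReal =
      ∑ i, (μ {ω | Y ω = y i}).toReal * blockCDF (Function.extend Fin.val α 0) k i t := by
  rw [toReal_measure_le_eq_sum_uniformCDF hY hτ hτlaw hindep hy.injective hYsupp hα
    fun i ω hω => by rw [hω, weightedRank_apply_atom hy, sum_Ioi_eq_massFrom_extend_val]]
  simp only [blockCDF, Fin.val_injective.extend_apply]

end weightedRank

theorem ks_distance_weighted_rank_general
    {Ω : Type*} [MeasurableSpace Ω] (μ : Measure Ω) [IsProbabilityMeasure μ]
    (k : ℕ) (hk : 0 < k) (y : Fin k → ℝ) (hy : StrictMono y)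
    (p : Fin k → ℝ) (hpsum : ∑ i, p i = 1)
    (α : Fin k → ℝ) (hα : ∀ i, α i ∈ Set.Ioo (0:ℝ) 1) (hαsum : ∑ i, α i = 1)
    (Y τ : Ω → ℝ) (hY : Measurable Y) (hτ : Measurable τ)
    (hYlaw : ∀ i, (μ {ω | Y ω = y i}).toReal = p i)
    (hYsupp : μ {ω | ∀ i, Y ω ≠ y i} = 0)
    (hτlaw : μ.map τ = volume.restrict (Set.Ioo (0:ℝ) 1))
    (hindep : IndepFun Y τ μ)
    (P : Ω → ℝ)
    (hP : ∀ ω, P ω =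
      (∑ i, α i * (if y i > Y ω then 1 else 0)) +
        τ ω * (∑ i, α i * (if y i = Y ω then 1 else 0)))
    (F F₀ : ℝ → ℝ)
    (hF : ∀ t, F t = (μ {ω | P ω ≤ t}).toReal)
    (hF₀ : ∀ t, F₀ t = min (max t 0) 1) :
    (⨆ ε : ℝ, |F ε - F₀ ε|) = ⨆ i : Fin k, |∑ j ∈ Finset.Iic i, (p j - α j)| := by
  obtain rfl : P = fun ω => weightedRank α y (τ ω) (Y ω) := funext hP
  have : NeZero k := ⟨hk.ne'⟩
  set a : ℕ → ℝ := Function.extend Fin.val α 0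
  set d : ℕ → ℝ := Function.extend Fin.val (fun j => p j - α j) 0
  have hai : ∀ i : Fin k, a i = α i := Fin.val_injective.extend_apply α 0
  have ha : ∀ m < k, 0 < a m := fun m hm => hai ⟨m, hm⟩ ▸ (hα _).1
  have hd : ∑ m ∈ range k, d m = 0 := by
    rw [sum_range_extend_val, sum_sub_distrib, hpsum, hαsum, sub_self]
  have hdiff : ∀ t, F t - F₀ t = ∑ m ∈ range k, d m * blockCDF a k m t := fun t => by
    rw [hF, toReal_measure_weightedRank_le hY hτ hτlaw hindep hy hYsupp (fun i => (hα i).1),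
      hF₀, ← sum_mul_blockCDF ha (by rw [sum_range_extend_val, hαsum]) t,
      sum_range_extend_val_mul, sum_range_extend_val_mul, ← sum_sub_distrib]
    simp only [hYlaw, sub_mul, a]
  have hbound : ∀ t, |F t - F₀ t| ≤ ⨆ i : Fin k, |∑ j ∈ Iic i, (p j - α j)| := fun t => by
    refine hdiff t ▸ abs_sum_mul_blockCDF_le ha hk hd (fun m hm => ?_) t
    rw [sum_range_succ_extend_val _ ⟨m, hm⟩]
    exact le_ciSup (f := fun i : Fin k => |∑ j ∈ Iic i, (p j - α j)|)
      (Set.finite_range _).bddAbove ⟨m, hm⟩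
  refine le_antisymm (ciSup_le hbound) (ciSup_le fun i => ?_)
  calc |∑ j ∈ Iic i, (p j - α j)|
      = |F (massFrom a k (i + 1)) - F₀ (massFrom a k (i + 1))| := by
        rw [hdiff, sum_mul_blockCDF_massFrom ha hd i.isLt, abs_neg, sum_range_succ_extend_val]
    _ ≤ ⨆ t : ℝ, |F t - F₀ t| := le_ciSup ⟨_, Set.forall_mem_range.2 hbound⟩ _

/-- KS distance of the weighted randomized rank from the uniform distribution equals the
maximal absolute partial-sum discrepancy between the atom probabilities `p` and weights `α`. -/
theorem ks_distance_weighted_rank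
    {Ω : Type*} [MeasurableSpace Ω] (μ : Measure Ω) [IsProbabilityMeasure μ]
    (k : ℕ) (hk : 0 < k) (y : Fin k → ℝ) (hy : StrictMono y)
    (p : Fin k → ℝ) (hp : ∀ i, p i ∈ Set.Ioo (0:ℝ) 1) (hpsum : ∑ i, p i = 1)
    (α : Fin k → ℝ) (hα : ∀ i, α i ∈ Set.Ioo (0:ℝ) 1) (hαsum : ∑ i, α i = 1)
    (Y τ : Ω → ℝ) (hY : Measurable Y) (hτ : Measurable τ)
    (hYlaw : ∀ i, (μ {ω | Y ω = y i}).toReal = p i)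
    (hYsupp : μ {ω | ∀ i, Y ω ≠ y i} = 0)
    (hτlaw : μ.map τ = volume.restrict (Set.Ioo (0:ℝ) 1))
    (hindep : IndepFun Y τ μ)
    (P : Ω → ℝ)
    (hP : ∀ ω, P ω =
      (∑ i, α i * (if y i > Y ω then 1 else 0)) +
        τ ω * (∑ i, α i * (if y i = Y ω then 1 else 0)))
    (F F₀ : ℝ → ℝ)
    (hF : ∀ t, F t = (μ {ω | P ω ≤ t}).toReal)
    (hF₀ : ∀ t, F₀ t = min (max t 0) 1) :
    (⨆ ε : ℝ, |F ε - F₀ ε|) = ⨆ i : Fin k, |∑ j ∈ Finset.Iic i, (p j - α j)| :=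
  ks_distance_weighted_rank_general μ k hk y hy p hpsum α hα hαsum Y τ hY hτ hYlaw hYsupp hτlaw
    hindep P hP F F₀ hF hF₀
end

section
/- Let $Z_1,\ldots,Z_n$ be exchangeable real random variables, let $\theta_1,\ldots,\theta_n \overset{iid}{\sim} \mathrm{Unif}(0,1)$ be independent of $(Z_1,\ldots,Z_n)$, and for $k \in [n]$ define $p_k = \frac{1}{k}\left(\sum_{i=1}^k \mathbf{1}(Z_i < Z_k) + \theta_k \sum_{i=1}^k \mathbf{1}(Z_i = Z_k)\right)$. Then $p_1,\ldots,p_n$ are i.i.d. $\mathrm{Unif}(0,1)$. -/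
open MeasureTheory ProbabilityTheory Set

namespace ConformalAux

variable {n : ℕ}

/-- number of indices with strictly smaller value -/
noncomputable def fLt (z : Fin n → ℝ) (j : Fin n) : ℕ := (Finset.univ.filter fun i => z i < z j).card
/-- number of indices with equal value -/
noncomputable def fEq (z : Fin n → ℝ) (j : Fin n) : ℕ := (Finset.univ.filter fun i => z i = z j).card
/-- number of indices with smaller-or-equal value -/
noncomputable def fLe (z : Fin n → ℝ) (j : Fin n) : ℕ := (Finset.univ.filter fun i => z i ≤ z j).card

lemma fLt_add_fEq (z : Fin n → ℝ) (j : Fin n) : fLt z j + fEq z j = fLe z j := by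
  classical
  rw [fLt, fEq, fLe, ← Finset.card_union_of_disjoint]
  · congr 1
    ext i
    simp [le_iff_lt_or_eq, Finset.mem_union]
  · rw [Finset.disjoint_left]
    intro i hi hi'
    simp only [Finset.mem_filter] at hi hi'
    exact absurd hi'.2 (ne_of_lt hi.2)

lemma fEq_pos (z : Fin n → ℝ) (j : Fin n) : 0 < fEq z j :=
  Finset.card_pos.2 ⟨j, by simp [fEq]⟩

lemma fLe_le (z : Fin n → ℝ) (j : Fin n) : fLe z j ≤ n := by
  simpa [fLe] using (Finset.card_filter_le _ _).trans_eq (by simp)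

lemma fLt_eq_of_eq {z : Fin n → ℝ} {j j' : Fin n} (h : z j = z j') : fLt z j = fLt z j' := by
  simp [fLt, h]

lemma fEq_eq_of_eq {z : Fin n → ℝ} {j j' : Fin n} (h : z j = z j') : fEq z j = fEq z j' := by
  simp [fEq, h]

lemma fLe_le_fLt_of_lt {z : Fin n → ℝ} {j j' : Fin n} (h : z j < z j') :
    fLe z j ≤ fLt z j' := by
  apply Finset.card_le_card
  intro i hi
  simp only [Finset.mem_filter] at hi ⊢
  exact ⟨hi.1, lt_of_le_of_lt hi.2 h⟩

open scoped ENNReal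

/-- Pointwise combinatorial core. -/
lemma point_sum (z : Fin n → ℝ) {x : ℝ} (hx : x ∈ Set.Ioc (0:ℝ) n) :
    ∑ j : Fin n, ((fEq z j : ℝ≥0∞))⁻¹ *
      (Set.Ioc (fLt z j : ℝ) ((fLt z j : ℝ) + (fEq z j : ℝ))).indicator
        (1 : ℝ → ℝ≥0∞) x = 1 := by
  classical
  set m := ⌈x⌉₊ with hm
  have hm1 : 0 < m := Nat.ceil_pos.2 hx.1
  have hmn : m ≤ n := Nat.ceil_le.2 hx.2
  have hmem : ∀ j, x ∈ Set.Ioc (fLt z j : ℝ) ((fLt z j : ℝ) + (fEq z j : ℝ)) ↔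
      (fLt z j < m ∧ m ≤ fLt z j + fEq z j) := by
    intro j
    constructor
    · rintro ⟨h1, h2⟩
      refine ⟨Nat.lt_ceil.2 h1, Nat.ceil_le.2 (by exact_mod_cast h2)⟩
    · rintro ⟨h1, h2⟩
      exact ⟨Nat.lt_ceil.1 h1, le_trans (Nat.le_ceil x) (by exact_mod_cast h2)⟩
  set A : Finset (Fin n) :=
    Finset.univ.filter (fun j => fLt z j < m ∧ m ≤ fLt z j + fEq z j) with hA
  -- the sum reduces to a sum over A
  have hsum : ∑ j : Fin n, ((fEq z j : ℝ≥0∞))⁻¹ *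
      (Set.Ioc (fLt z j : ℝ) ((fLt z j : ℝ) + (fEq z j : ℝ))).indicator
        (1 : ℝ → ℝ≥0∞) x = ∑ j ∈ A, ((fEq z j : ℝ≥0∞))⁻¹ := by
    rw [Finset.sum_filter]
    apply Finset.sum_congr rfl
    intro j _
    by_cases hj : fLt z j < m ∧ m ≤ fLt z j + fEq z j
    · rw [if_pos hj, Set.indicator_of_mem ((hmem j).2 hj)]; simp
    · rw [if_neg hj, Set.indicator_of_notMem (fun hmem' => hj ((hmem j).1 hmem')), mul_zero]
  -- A is nonempty
  have hAne : A.Nonempty := by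
    have hn0 : 0 < n := lt_of_lt_of_le hm1 hmn
    have huniv : (Finset.univ : Finset (Fin n)).Nonempty := by
      simpa [Finset.univ_nonempty_iff] using Fin.pos_iff_nonempty.1 hn0
    set S : Finset (Fin n) := Finset.univ.filter (fun j => m ≤ fLt z j + fEq z j) with hS
    have hSne : S.Nonempty := by
      obtain ⟨jmax, _, hjmax⟩ := Finset.exists_max_image Finset.univ z huniv
      refine ⟨jmax, Finset.mem_filter.2 ⟨Finset.mem_univ _, ?_⟩⟩
      rw [fLt_add_fEq]
      have : fLe z jmax = n := by
        rw [fLe]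
        rw [Finset.filter_true_of_mem (fun i _ => hjmax i (Finset.mem_univ i))]
        simp
      omega
    obtain ⟨j₀, hj₀S, hj₀min⟩ := Finset.exists_min_image S z hSne
    have hj₀m : m ≤ fLt z j₀ + fEq z j₀ := (Finset.mem_filter.1 hj₀S).2
    refine ⟨j₀, Finset.mem_filter.2 ⟨Finset.mem_univ _, ?_, hj₀m⟩⟩
    by_contra hcon
    push_neg at hcon
    have hBne : (Finset.univ.filter fun i => z i < z j₀).Nonempty := by
      rw [← Finset.card_pos]
      calc 0 < m := hm1
      _ ≤ _ := hcon
    obtain ⟨i₀, hi₀B, hi₀max⟩ := Finset.exists_max_image _ z hBne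
    have hi₀lt : z i₀ < z j₀ := (Finset.mem_filter.1 hi₀B).2
    have : m ≤ fLe z i₀ := by
      refine le_trans hcon (Finset.card_le_card ?_)
      intro i hi
      simp only [Finset.mem_filter] at hi ⊢
      exact ⟨hi.1, hi₀max i (Finset.mem_filter.2 hi)⟩
    have hi₀S : i₀ ∈ S := Finset.mem_filter.2 ⟨Finset.mem_univ _, by rw [fLt_add_fEq]; exact this⟩
    exact absurd hi₀lt (not_lt.2 (hj₀min i₀ hi₀S))
  obtain ⟨j₀, hj₀⟩ := hAne
  have hj₀' := Finset.mem_filter.1 hj₀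
  -- all members of A have the same value
  have hvaleq : ∀ j ∈ A, z j = z j₀ := by
    have key : ∀ j ∈ A, ∀ j' ∈ A, ¬ z j < z j' := by
      intro j hj j' hj' hlt
      have h1 := (Finset.mem_filter.1 hj).2
      have h2 := (Finset.mem_filter.1 hj').2
      have : fLt z j + fEq z j ≤ fLt z j' := by
        rw [fLt_add_fEq]; exact fLe_le_fLt_of_lt hlt
      omega
    intro j hj
    rcases lt_trichotomy (z j) (z j₀) with h | h | h
    · exact absurd h (key j hj j₀ hj₀)
    · exact h
    · exact absurd h (key j₀ hj₀ j hj)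
  have hAeq : A = Finset.univ.filter (fun j => z j = z j₀) := by
    apply Finset.ext
    intro j
    simp only [hA, Finset.mem_filter, Finset.mem_univ, true_and]
    constructor
    · intro hj
      exact hvaleq j (Finset.mem_filter.2 ⟨Finset.mem_univ _, hj⟩)
    · intro hzeq
      rw [fLt_eq_of_eq hzeq, fEq_eq_of_eq hzeq]
      exact hj₀'.2
  have hcardA : A.card = fEq z j₀ := by rw [hAeq]; rfl
  have hfeq : ∀ j ∈ A, fEq z j = fEq z j₀ := fun j hj => fEq_eq_of_eq (hvaleq j hj)
  rw [hsum, Finset.sum_congr rfl (fun j hj => by rw [hfeq j hj]), Finset.sum_const, hcardA,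
    nsmul_eq_mul]
  exact ENNReal.mul_inv_cancel (by exact_mod_cast (fEq_pos z j₀).ne') (by simp)


open scoped ENNReal

lemma vol_inter_Ioo_eq_Ioc {T : Set ℝ} {a b : ℝ} (hab : a ≤ b) :
    volume (T ∩ Ioo a b) = volume (T ∩ Ioc a b) := by
  apply le_antisymm (measure_mono (inter_subset_inter_right _ Ioo_subset_Ioc_self))
  calc volume (T ∩ Ioc a b) ≤ volume ((T ∩ Ioo a b) ∪ {b}) := by
        apply measure_mono
        rintro x ⟨hxT, hx1, hx2⟩
        rcases eq_or_lt_of_le hx2 with h | h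
        · exact Or.inr (by simp [h])
        · exact Or.inl ⟨hxT, hx1, h⟩
    _ ≤ volume (T ∩ Ioo a b) + volume ({b} : Set ℝ) := measure_union_le _ _
    _ = volume (T ∩ Ioo a b) := by simp

lemma affine_vol {L g : ℕ} (hg : 0 < g) (T : Set ℝ) :
    volume ({x : ℝ | (L:ℝ) + x * (g:ℝ) ∈ T} ∩ Ioo 0 1)
      = ((g:ℝ≥0∞))⁻¹ * volume (T ∩ Ioc (L:ℝ) ((L:ℝ) + (g:ℝ))) := by
  have hg' : (0:ℝ) < g := by exact_mod_cast hg
  have hset : {x : ℝ | (L:ℝ) + x * (g:ℝ) ∈ T} ∩ Ioo 0 1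
      = (fun x : ℝ => x * g) ⁻¹' ((fun y : ℝ => (L:ℝ) + y) ⁻¹' (T ∩ Ioo (L:ℝ) ((L:ℝ) + g))) := by
    ext x
    simp only [Set.mem_inter_iff, Set.mem_setOf_eq, Set.mem_preimage, Set.mem_Ioo]
    constructor
    · rintro ⟨hT, h1, h2⟩
      exact ⟨hT, by nlinarith, by nlinarith⟩
    · rintro ⟨hT, h1, h2⟩
      refine ⟨hT, by nlinarith, by nlinarith⟩
  rw [hset, Real.volume_preimage_mul_right hg'.ne', measure_preimage_add,
    vol_inter_Ioo_eq_Ioc (by linarith)]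
  congr 1
  rw [← ENNReal.ofReal_natCast g, ← ENNReal.ofReal_inv_of_pos hg']
  congr 1
  rw [abs_of_pos (by positivity)]

lemma sum_full (z : Fin n → ℝ) {T : Set ℝ} (hT : MeasurableSet T) :
    ∑ j : Fin n, volume ({x : ℝ | (fLt z j : ℝ) + x * (fEq z j : ℝ) ∈ T} ∩ Ioo 0 1)
      = volume (T ∩ Ioc 0 (n : ℝ)) := by
  classical
  have key : ∀ j, volume ({x : ℝ | (fLt z j : ℝ) + x * (fEq z j : ℝ) ∈ T} ∩ Ioo 0 1)
      = ∫⁻ x, ((fEq z j : ℝ≥0∞))⁻¹ *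
          (Set.Ioc (fLt z j : ℝ) ((fLt z j : ℝ) + (fEq z j : ℝ))).indicator
            (1 : ℝ → ℝ≥0∞) x ∂(volume.restrict T) := by
    intro j
    rw [affine_vol (fEq_pos z j) T]
    have hrhs : ∫⁻ x, ((fEq z j : ℝ≥0∞))⁻¹ *
        (Set.Ioc (fLt z j : ℝ) ((fLt z j : ℝ) + (fEq z j : ℝ))).indicator
          (1 : ℝ → ℝ≥0∞) x ∂(volume.restrict T)
        = ((fEq z j : ℝ≥0∞))⁻¹ * volume (T ∩ Ioc (fLt z j : ℝ) ((fLt z j : ℝ) + (fEq z j : ℝ))) := by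
      rw [lintegral_const_mul _ ((measurable_one.indicator measurableSet_Ioc))]
      congr 1
      rw [lintegral_indicator measurableSet_Ioc]
      simp only [Pi.one_apply, lintegral_one, Measure.restrict_restrict measurableSet_Ioc,
        Measure.restrict_apply MeasurableSet.univ, Set.univ_inter]
      rw [Set.inter_comm]
    rw [hrhs]
  calc ∑ j : Fin n, volume ({x : ℝ | (fLt z j : ℝ) + x * (fEq z j : ℝ) ∈ T} ∩ Ioo 0 1)
      = ∫⁻ x, ∑ j : Fin n, ((fEq z j : ℝ≥0∞))⁻¹ *
          (Set.Ioc (fLt z j : ℝ) ((fLt z j : ℝ) + (fEq z j : ℝ))).indicator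
            (1 : ℝ → ℝ≥0∞) x ∂(volume.restrict T) := by
        rw [Finset.sum_congr rfl (fun j _ => key j)]
        rw [← lintegral_finset_sum]
        intro j _
        exact (measurable_one.indicator measurableSet_Ioc).const_mul _
    _ = ∫⁻ x, (Set.Ioc (0:ℝ) (n:ℝ)).indicator (1 : ℝ → ℝ≥0∞) x ∂(volume.restrict T) := by
        apply lintegral_congr
        intro x
        by_cases hx : x ∈ Set.Ioc (0:ℝ) (n:ℝ)
        · rw [Set.indicator_of_mem hx, point_sum z hx]; rfl
        · rw [Set.indicator_of_notMem hx]
          apply Finset.sum_eq_zero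
          intro j _
          rw [Set.indicator_of_notMem, mul_zero]
          intro hmem
          apply hx
          rcases hmem with ⟨h1, h2⟩
          constructor
          · exact lt_of_le_of_lt (by positivity) h1
          · refine le_trans h2 ?_
            have := fLe_le z j
            rw [← fLt_add_fEq] at this
            have : ((fLt z j + fEq z j : ℕ) : ℝ) ≤ (n : ℝ) := by exact_mod_cast this
            push_cast at this
            linarith
    _ = volume (T ∩ Ioc 0 (n : ℝ)) := by
        rw [lintegral_indicator measurableSet_Ioc]
        simp [Measure.restrict_restrict measurableSet_Ioc, Set.inter_comm]

lemma sum_full_scaled (hn : 0 < n) (z : Fin n → ℝ) {s : Set ℝ} (hs : MeasurableSet s) :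
    ∑ j : Fin n, volume ({x : ℝ | ((fLt z j : ℝ) + x * (fEq z j : ℝ)) / (n:ℝ) ∈ s} ∩ Ioo 0 1)
      = (n : ℝ≥0∞) * volume (s ∩ Ioo 0 1) := by
  have hn' : (0:ℝ) < n := by exact_mod_cast hn
  have hT : MeasurableSet ((fun y : ℝ => y / (n:ℝ)) ⁻¹' s) :=
    (measurable_id.div_const _) hs
  have h1 := sum_full z hT
  have hset : ((fun y : ℝ => y / (n:ℝ)) ⁻¹' s) ∩ Ioc 0 (n:ℝ)
      = (fun y : ℝ => y * (n:ℝ)⁻¹) ⁻¹' (s ∩ Ioc 0 1) := by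
    ext y
    simp only [Set.mem_inter_iff, Set.mem_preimage, Set.mem_Ioc, div_eq_mul_inv]
    constructor
    · rintro ⟨hs', h1', h2'⟩
      exact ⟨hs', by positivity, by rw [← mul_inv_cancel₀ hn'.ne']; gcongr⟩
    · rintro ⟨hs', h1', h2'⟩
      refine ⟨hs', ?_, ?_⟩
      · nlinarith [inv_pos.2 hn']
      · calc y = y * (n:ℝ)⁻¹ * n := by field_simp
          _ ≤ 1 * n := by gcongr
          _ = n := one_mul _
  rw [hset, Real.volume_preimage_mul_right (by positivity : ((n:ℝ)⁻¹) ≠ 0)] at h1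
  have h2 : ENNReal.ofReal |((n:ℝ)⁻¹)⁻¹| = (n : ℝ≥0∞) := by
    rw [inv_inv, abs_of_pos hn', ENNReal.ofReal_natCast]
  rw [h2, ← vol_inter_Ioo_eq_Ioc zero_le_one] at h1
  exact h1

/-- suffix count: strictly smaller among indices `≥ k` -/
noncomputable def sLt (w : Fin n → ℝ) (k : Fin n) : ℕ :=
  (Finset.univ.filter fun i => k ≤ i ∧ w i < w k).card
/-- suffix count: equal among indices `≥ k` -/
noncomputable def sEq (w : Fin n → ℝ) (k : Fin n) : ℕ :=
  (Finset.univ.filter fun i => k ≤ i ∧ w i = w k).card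

/-- The conditional probability that the suffix-based p-value at `k` lies in `s`. -/
noncomputable def H (w : Fin n → ℝ) (k : Fin n) (s : Set ℝ) : ℝ≥0∞ :=
  volume ({x : ℝ | ((sLt w k : ℝ) + x * (sEq w k : ℝ)) / ((n - (k : ℕ) : ℕ) : ℝ) ∈ s}
    ∩ Ioo 0 1)

lemma sLt_zero (w : Fin (n+1) → ℝ) : sLt w 0 = fLt w 0 := by
  simp [sLt, fLt, Fin.zero_le]

lemma sEq_zero (w : Fin (n+1) → ℝ) : sEq w 0 = fEq w 0 := by
  simp [sEq, fEq, Fin.zero_le]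

lemma fLt_comp_perm (z : Fin n → ℝ) (σ : Equiv.Perm (Fin n)) (j : Fin n) :
    fLt (z ∘ σ) j = fLt z (σ j) := by
  unfold fLt
  apply Finset.card_bij (fun i _ => σ i)
  · intro i hi
    simp only [Finset.mem_filter, Finset.mem_univ, true_and, Function.comp_apply] at hi ⊢
    exact hi
  · intro i _ i' _ h
    exact σ.injective h
  · intro i hi
    refine ⟨σ.symm i, ?_, by simp⟩
    simp only [Finset.mem_filter, Finset.mem_univ, true_and, Function.comp_apply,
      Equiv.apply_symm_apply] at hi ⊢
    exact hi

lemma fEq_comp_perm (z : Fin n → ℝ) (σ : Equiv.Perm (Fin n)) (j : Fin n) :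
    fEq (z ∘ σ) j = fEq z (σ j) := by
  unfold fEq
  apply Finset.card_bij (fun i _ => σ i)
  · intro i hi
    simp only [Finset.mem_filter, Finset.mem_univ, true_and, Function.comp_apply] at hi ⊢
    exact hi
  · intro i _ i' _ h
    exact σ.injective h
  · intro i hi
    refine ⟨σ.symm i, ?_, by simp⟩
    simp only [Finset.mem_filter, Finset.mem_univ, true_and, Function.comp_apply,
      Equiv.apply_symm_apply] at hi ⊢
    exact hi

/-- removing the entry that the decomposition sends to position `0` -/
noncomputable def drop (z : Fin (n+1) → ℝ) (j : Fin (n+1)) : Fin n → ℝ :=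
  fun i => z (Equiv.swap 0 j i.succ)

lemma card_succ_filter {P : ℝ → Prop} [DecidablePred P] (w : Fin (n+1) → ℝ) (w' : Fin n → ℝ)
    (hw : ∀ i : Fin n, w i.succ = w' i) (k : Fin n) :
    (Finset.univ.filter fun i : Fin (n+1) => k.succ ≤ i ∧ P (w i)).card
      = (Finset.univ.filter fun i : Fin n => k ≤ i ∧ P (w' i)).card := by
  classical
  rw [← Finset.card_image_of_injective
    (Finset.univ.filter fun i : Fin n => k ≤ i ∧ P (w' i)) (Fin.succ_injective n)]
  congr 1
  ext i
  simp only [Finset.mem_image, Finset.mem_filter, Finset.mem_univ, true_and]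
  constructor
  · rintro ⟨h1, h2⟩
    have hne : i ≠ 0 := by
      rintro rfl
      exact absurd h1 (not_le.2 (Fin.succ_pos k))
    obtain ⟨i', rfl⟩ := Fin.exists_succ_eq.2 hne
    exact ⟨i', ⟨Fin.succ_le_succ_iff.1 h1, by rwa [hw] at h2⟩, rfl⟩
  · rintro ⟨i', ⟨h1, h2⟩, rfl⟩
    exact ⟨Fin.succ_le_succ_iff.2 h1, by rwa [hw]⟩

lemma comp_succ_eq (z : Fin (n+1) → ℝ) (j : Fin (n+1)) (τ : Equiv.Perm (Fin n)) (i : Fin n) :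
    (z ∘ (Equiv.Perm.decomposeFin.symm (j, τ))) i.succ = (drop z j ∘ τ) i := by
  simp [drop, Equiv.Perm.decomposeFin_symm_apply_succ]

lemma sLt_succ (z : Fin (n+1) → ℝ) (j : Fin (n+1)) (τ : Equiv.Perm (Fin n)) (k : Fin n) :
    sLt (z ∘ (Equiv.Perm.decomposeFin.symm (j, τ))) k.succ = sLt (drop z j ∘ τ) k := by
  classical
  unfold sLt
  simp only [comp_succ_eq z j τ k]
  exact card_succ_filter (P := fun x => x < (drop z j ∘ τ) k) _ _ (comp_succ_eq z j τ) k

lemma sEq_succ (z : Fin (n+1) → ℝ) (j : Fin (n+1)) (τ : Equiv.Perm (Fin n)) (k : Fin n) :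
    sEq (z ∘ (Equiv.Perm.decomposeFin.symm (j, τ))) k.succ = sEq (drop z j ∘ τ) k := by
  classical
  unfold sEq
  simp only [comp_succ_eq z j τ k]
  exact card_succ_filter (P := fun x => x = (drop z j ∘ τ) k) _ _ (comp_succ_eq z j τ) k

lemma H_succ (z : Fin (n+1) → ℝ) (j : Fin (n+1)) (τ : Equiv.Perm (Fin n)) (k : Fin n)
    (s : Set ℝ) :
    H (z ∘ (Equiv.Perm.decomposeFin.symm (j, τ))) k.succ s = H (drop z j ∘ τ) k s := by
  unfold H
  rw [sLt_succ, sEq_succ]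
  congr 2
  simp [Fin.val_succ, Nat.succ_sub_succ]

lemma H_zero (z : Fin (n+1) → ℝ) (σ : Equiv.Perm (Fin (n+1))) (s : Set ℝ) :
    H (z ∘ σ) 0 s = volume ({x : ℝ |
      ((fLt z (σ 0) : ℝ) + x * (fEq z (σ 0) : ℝ)) / ((n+1 : ℕ) : ℝ) ∈ s} ∩ Ioo 0 1) := by
  unfold H
  rw [sLt_zero, sEq_zero, fLt_comp_perm, fEq_comp_perm]
  norm_num

lemma main_sum : ∀ (n : ℕ) (z : Fin n → ℝ) (s : Fin n → Set ℝ), (∀ k, MeasurableSet (s k)) →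
    ∑ σ : Equiv.Perm (Fin n), ∏ k, H (z ∘ σ) k (s k)
      = (n.factorial : ℝ≥0∞) * ∏ k, volume (s k ∩ Ioo 0 1) := by
  intro n
  induction n with
  | zero =>
    intro z s _
    simp
  | succ n ih =>
    intro z s hs
    rw [← Equiv.sum_comp (Equiv.Perm.decomposeFin.symm)
      (fun σ => ∏ k, H (z ∘ σ) k (s k)), Fintype.sum_prod_type]
    have hterm : ∀ (j : Fin (n+1)) (τ : Equiv.Perm (Fin n)),
        ∏ k, H (z ∘ (Equiv.Perm.decomposeFin.symm (j, τ))) k (s k)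
          = (volume ({x : ℝ | ((fLt z j : ℝ) + x * (fEq z j : ℝ)) / ((n+1 : ℕ) : ℝ) ∈ s 0}
              ∩ Ioo 0 1))
            * ∏ k : Fin n, H (drop z j ∘ τ) k (s k.succ) := by
      intro j τ
      rw [Fin.prod_univ_succ]
      congr 1
      · rw [H_zero]
        congr 2
        simp
      · exact Finset.prod_congr rfl fun k _ => H_succ z j τ k (s k.succ)
    calc ∑ j : Fin (n+1), ∑ τ : Equiv.Perm (Fin n),
          ∏ k, H (z ∘ (Equiv.Perm.decomposeFin.symm (j, τ))) k (s k)
        = ∑ j : Fin (n+1),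
            (volume ({x : ℝ | ((fLt z j : ℝ) + x * (fEq z j : ℝ)) / ((n+1 : ℕ) : ℝ) ∈ s 0}
              ∩ Ioo 0 1))
            * ((n.factorial : ℝ≥0∞) * ∏ k : Fin n, volume (s k.succ ∩ Ioo 0 1)) := by
          refine Finset.sum_congr rfl fun j _ => ?_
          rw [Finset.sum_congr rfl (fun τ _ => hterm j τ), ← Finset.mul_sum,
            ih (drop z j) (fun k => s k.succ) (fun k => hs k.succ)]
      _ = (∑ j : Fin (n+1),
            volume ({x : ℝ | ((fLt z j : ℝ) + x * (fEq z j : ℝ)) / ((n+1 : ℕ) : ℝ) ∈ s 0}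
              ∩ Ioo 0 1))
            * ((n.factorial : ℝ≥0∞) * ∏ k : Fin n, volume (s k.succ ∩ Ioo 0 1)) :=
          (Finset.sum_mul _ _ _).symm
      _ = (((n+1 : ℕ) : ℝ≥0∞) * volume (s 0 ∩ Ioo 0 1))
            * ((n.factorial : ℝ≥0∞) * ∏ k : Fin n, volume (s k.succ ∩ Ioo 0 1)) := by
          rw [sum_full_scaled (Nat.succ_pos n) z (hs 0)]
      _ = ((n+1).factorial : ℝ≥0∞) * ∏ k : Fin (n+1), volume (s k ∩ Ioo 0 1) := by
          rw [Fin.prod_univ_succ, Nat.factorial_succ]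
          push_cast
          ring

/-- prefix count: strictly smaller among indices `≤ k` -/
noncomputable def pLt (w : Fin n → ℝ) (k : Fin n) : ℕ :=
  (Finset.univ.filter fun i => i ≤ k ∧ w i < w k).card
/-- prefix count: equal among indices `≤ k` -/
noncomputable def pEq (w : Fin n → ℝ) (k : Fin n) : ℕ :=
  (Finset.univ.filter fun i => i ≤ k ∧ w i = w k).card

/-- The conditional probability that the p-value at `k` lies in `s`. -/
noncomputable def F (w : Fin n → ℝ) (k : Fin n) (s : Set ℝ) : ℝ≥0∞ :=
  volume ({x : ℝ | ((pLt w k : ℝ) + x * (pEq w k : ℝ)) / (((k : ℕ) : ℝ) + 1) ∈ s}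
    ∩ Ioo 0 1)

lemma pLt_rev (w : Fin n → ℝ) (k : Fin n) : pLt w k = sLt (w ∘ Fin.rev) k.rev := by
  unfold pLt sLt
  apply Finset.card_bij (fun i _ => Fin.rev i)
  · intro i hi
    simp only [Finset.mem_filter, Finset.mem_univ, true_and, Function.comp_apply,
      Fin.rev_rev] at hi ⊢
    exact ⟨Fin.rev_le_rev.mpr hi.1, hi.2⟩
  · intro i _ i' _ h
    exact Fin.rev_injective h
  · intro i hi
    refine ⟨Fin.rev i, ?_, by simp⟩
    simp only [Finset.mem_filter, Finset.mem_univ, true_and, Function.comp_apply,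
      Fin.rev_rev] at hi ⊢
    refine ⟨?_, hi.2⟩
    rw [← Fin.rev_le_rev, Fin.rev_rev]
    exact hi.1

lemma pEq_rev (w : Fin n → ℝ) (k : Fin n) : pEq w k = sEq (w ∘ Fin.rev) k.rev := by
  unfold pEq sEq
  apply Finset.card_bij (fun i _ => Fin.rev i)
  · intro i hi
    simp only [Finset.mem_filter, Finset.mem_univ, true_and, Function.comp_apply,
      Fin.rev_rev] at hi ⊢
    exact ⟨Fin.rev_le_rev.mpr hi.1, hi.2⟩
  · intro i _ i' _ h
    exact Fin.rev_injective h
  · intro i hi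
    refine ⟨Fin.rev i, ?_, by simp⟩
    simp only [Finset.mem_filter, Finset.mem_univ, true_and, Function.comp_apply,
      Fin.rev_rev] at hi ⊢
    refine ⟨?_, hi.2⟩
    rw [← Fin.rev_le_rev, Fin.rev_rev]
    exact hi.1

lemma F_eq_H_rev (w : Fin n → ℝ) (k : Fin n) (s : Set ℝ) :
    F w k s = H (w ∘ Fin.rev) k.rev s := by
  have hd : ((n - ((Fin.rev k : Fin n) : ℕ) : ℕ) : ℝ) = ((k : ℕ) : ℝ) + 1 := by
    rw [Fin.val_rev]
    have := k.isLt
    have h : n - (n - ((k : ℕ) + 1)) = (k : ℕ) + 1 := by omega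
    rw [h]
    push_cast
    ring
  unfold F H
  rw [pLt_rev, pEq_rev, hd]

lemma main_sum_F (n : ℕ) (z : Fin n → ℝ) (s : Fin n → Set ℝ) (hs : ∀ k, MeasurableSet (s k)) :
    ∑ σ : Equiv.Perm (Fin n), ∏ k, F (z ∘ σ) k (s k)
      = (n.factorial : ℝ≥0∞) * ∏ k, volume (s k ∩ Ioo 0 1) := by
  have hσ : ∀ σ : Equiv.Perm (Fin n), ∏ k, F (z ∘ σ) k (s k)
      = ∏ k, H (z ∘ ⇑(σ * (Fin.revPerm : Equiv.Perm (Fin n)))) k (s (Fin.rev k)) := by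
    intro σ
    rw [← Equiv.prod_comp (Fin.revPerm : Equiv.Perm (Fin n))
      (fun k => H (z ∘ ⇑(σ * (Fin.revPerm : Equiv.Perm (Fin n)))) k (s (Fin.rev k)))]
    refine Finset.prod_congr rfl fun k _ => ?_
    rw [F_eq_H_rev]
    simp only [Fin.revPerm_apply, Fin.rev_rev]
    rfl
  calc ∑ σ : Equiv.Perm (Fin n), ∏ k, F (z ∘ σ) k (s k)
      = ∑ σ : Equiv.Perm (Fin n),
          ∏ k, H (z ∘ ⇑(σ * (Fin.revPerm : Equiv.Perm (Fin n)))) k (s (Fin.rev k)) :=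
        Finset.sum_congr rfl fun σ _ => hσ σ
    _ = ∑ σ : Equiv.Perm (Fin n), ∏ k, H (z ∘ ⇑σ) k (s (Fin.rev k)) := by
        apply Fintype.sum_equiv (Equiv.mulRight (Fin.revPerm : Equiv.Perm (Fin n)))
        intro σ
        rfl
    _ = (n.factorial : ℝ≥0∞) * ∏ k, volume (s (Fin.rev k) ∩ Ioo 0 1) :=
        main_sum n z (fun k => s (Fin.rev k)) (fun k => hs _)
    _ = (n.factorial : ℝ≥0∞) * ∏ k, volume (s k ∩ Ioo 0 1) := by
        congr 1
        exact Fintype.prod_equiv (Fin.revPerm : Equiv.Perm (Fin n)) _ _ (fun k => rfl)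

lemma measurable_pLt (k : Fin n) : Measurable fun z : Fin n → ℝ => pLt z k := by
  classical
  have h : (fun z : Fin n → ℝ => pLt z k)
      = fun z => ∑ i : Fin n, if i ≤ k ∧ z i < z k then (1:ℕ) else 0 := by
    funext z
    rw [pLt]
    simpa using Finset.natCast_card_filter (α := ℕ) (fun i => i ≤ k ∧ z i < z k) Finset.univ
  rw [h]
  apply Finset.measurable_sum
  intro i _
  refine Measurable.ite ?_ measurable_const measurable_const
  rw [Set.setOf_and]
  exact (MeasurableSet.const _).inter
    (measurableSet_lt (measurable_pi_apply i) (measurable_pi_apply k))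

lemma measurable_pEq (k : Fin n) : Measurable fun z : Fin n → ℝ => pEq z k := by
  classical
  have h : (fun z : Fin n → ℝ => pEq z k)
      = fun z => ∑ i : Fin n, if i ≤ k ∧ z i = z k then (1:ℕ) else 0 := by
    funext z
    rw [pEq]
    simpa using Finset.natCast_card_filter (α := ℕ) (fun i => i ≤ k ∧ z i = z k) Finset.univ
  rw [h]
  apply Finset.measurable_sum
  intro i _
  refine Measurable.ite ?_ measurable_const measurable_const
  rw [Set.setOf_and]
  exact (MeasurableSet.const _).inter
    (measurableSet_eq_fun (measurable_pi_apply i) (measurable_pi_apply k))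

end ConformalAux

open scoped ENNReal

open ConformalAux in
/-- Vovk's fundamental property of randomized conformal p-values: if `Z₁,…,Zₙ` are
exchangeable and `θ₁,…,θₙ` are i.i.d. uniform on `(0,1)` independent of the `Z`'s, then
the sequentially computed smoothed ranks `p₁,…,pₙ` are i.i.d. uniform on `(0,1)`. -/
theorem conformal_pvalues_iid_uniform
    {Ω : Type*} [MeasurableSpace Ω] (μ : Measure Ω) [IsProbabilityMeasure μ]
    (n : ℕ) (Z θ : Fin n → Ω → ℝ)
    (hZ : ∀ i, Measurable (Z i)) (hθ : ∀ i, Measurable (θ i))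
    (hexch : ∀ σ : Equiv.Perm (Fin n),
      μ.map (fun ω i => Z (σ i) ω) = μ.map (fun ω i => Z i ω))
    (hθindep : iIndepFun θ μ)
    (hθunif : ∀ i, μ.map (θ i) = volume.restrict (Set.Ioo (0:ℝ) 1))
    (hZθ : IndepFun (fun ω i => Z i ω) (fun ω i => θ i ω) μ)
    (p : Fin n → Ω → ℝ)
    (hp : ∀ k ω, p k ω =
      (((Finset.univ.filter fun i : Fin n => i ≤ k ∧ Z i ω < Z k ω).card : ℝ) +
        θ k ω * ((Finset.univ.filter fun i : Fin n => i ≤ k ∧ Z i ω = Z k ω).card : ℝ))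
        / ((k : ℕ) + 1)) :
    iIndepFun p μ ∧
      ∀ k, μ.map (p k) = volume.restrict (Set.Ioo (0:ℝ) 1) := by
  classical
  have unif_prob : IsProbabilityMeasure (volume.restrict (Set.Ioo (0:ℝ) 1)) :=
    ⟨by simp [Real.volume_Ioo]⟩
  set Zv : Ω → (Fin n → ℝ) := fun ω i => Z i ω with hZv_def
  set θv : Ω → (Fin n → ℝ) := fun ω i => θ i ω with hθv_def
  have hZv : Measurable Zv := measurable_pi_lambda _ hZ
  have hθv : Measurable θv := measurable_pi_lambda _ hθ
  have hpk : ∀ k, Measurable (p k) := by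
    intro k
    have : p k = fun ω => ((pLt (Zv ω) k : ℝ) + θv ω k * (pEq (Zv ω) k : ℝ))
        / (((k : ℕ) : ℝ) + 1) := by
      funext ω
      exact hp k ω
    rw [this]
    apply Measurable.div_const
    apply Measurable.add
    · exact (measurable_of_countable (fun m : ℕ => (m:ℝ))).comp ((measurable_pLt k).comp hZv)
    · exact ((measurable_pi_apply k).comp hθv).mul
        ((measurable_of_countable (fun m : ℕ => (m:ℝ))).comp ((measurable_pEq k).comp hZv))
  set pv : Ω → (Fin n → ℝ) := fun ω k => p k ω with hpv_def
  have hpv : Measurable pv := measurable_pi_lambda _ hpk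
  -- the law of the noise vector is the product of uniforms
  have hθpi : μ.map θv = Measure.pi (fun _ : Fin n => volume.restrict (Set.Ioo (0:ℝ) 1)) := by
    refine (Measure.pi_eq fun s hs => ?_).symm
    rw [Measure.map_apply hθv (MeasurableSet.univ_pi hs)]
    have hiInt : θv ⁻¹' Set.pi Set.univ s = ⋂ i ∈ Finset.univ, θ i ⁻¹' s i := by
      ext ω
      simp [θv, Set.mem_pi]
    rw [hiInt, hθindep.measure_inter_preimage_eq_mul Finset.univ (fun i _ => hs i)]
    exact Finset.prod_congr rfl fun i _ => by
      rw [← Measure.map_apply (hθ i) (hs i), hθunif i]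
  have hpair : μ.map (fun ω => (Zv ω, θv ω)) = (μ.map Zv).prod (μ.map θv) :=
    (indepFun_iff_map_prod_eq_prod_map_map hZv.aemeasurable hθv.aemeasurable).1 hZθ
  set ν := μ.map Zv with hν_def
  have hνprob : IsProbabilityMeasure ν := Measure.isProbabilityMeasure_map hZv.aemeasurable
  -- the joint law of the p-values
  have key : ∀ s : Fin n → Set ℝ, (∀ i, MeasurableSet (s i)) →
      μ.map pv (Set.pi Set.univ s) = ∏ k, volume (s k ∩ Set.Ioo 0 1) := by
    intro s hs
    have hGk : ∀ k : Fin n, Measurable (fun q : (Fin n → ℝ) × (Fin n → ℝ) =>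
        ((pLt q.1 k : ℝ) + q.2 k * (pEq q.1 k : ℝ)) / (((k : ℕ) : ℝ) + 1)) := by
      intro k
      apply Measurable.div_const
      apply Measurable.add
      · exact (measurable_of_countable (fun m : ℕ => (m:ℝ))).comp
          ((measurable_pLt k).comp measurable_fst)
      · exact ((measurable_pi_apply k).comp measurable_snd).mul
          ((measurable_of_countable (fun m : ℕ => (m:ℝ))).comp
            ((measurable_pEq k).comp measurable_fst))
    set W : Set ((Fin n → ℝ) × (Fin n → ℝ)) :=
      {q | ∀ k, ((pLt q.1 k : ℝ) + q.2 k * (pEq q.1 k : ℝ)) / (((k : ℕ) : ℝ) + 1) ∈ s k}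
      with hW_def
    have hW : MeasurableSet W := by
      have : W = ⋂ k, (fun q : (Fin n → ℝ) × (Fin n → ℝ) =>
          ((pLt q.1 k : ℝ) + q.2 k * (pEq q.1 k : ℝ)) / (((k : ℕ) : ℝ) + 1)) ⁻¹' (s k) := by
        ext q
        simp [W]
      rw [this]
      exact MeasurableSet.iInter fun k => (hGk k) (hs k)
    have hFmeas : ∀ k : Fin n, Measurable (fun z : Fin n → ℝ => F z k (s k)) := by
      intro k
      have hrepr : (fun z : Fin n → ℝ => F z k (s k)) =
          (fun Lg : ℕ × ℕ => volume ({x : ℝ |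
              ((Lg.1 : ℝ) + x * (Lg.2 : ℝ)) / (((k : ℕ) : ℝ) + 1) ∈ s k} ∩ Set.Ioo 0 1))
            ∘ (fun z => (pLt z k, pEq z k)) := rfl
      rw [hrepr]
      exact (measurable_of_countable _).comp ((measurable_pLt k).prodMk (measurable_pEq k))
    have hf : Measurable (fun z : Fin n → ℝ => ∏ k, F z k (s k)) :=
      Finset.measurable_prod _ (fun k _ => hFmeas k)
    have hstep1 : μ.map pv (Set.pi Set.univ s) = μ.map (fun ω => (Zv ω, θv ω)) W := by
      rw [Measure.map_apply hpv (MeasurableSet.univ_pi hs),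
        Measure.map_apply (hZv.prodMk hθv) hW]
      congr 1
      ext ω
      simp only [Set.mem_preimage, Set.mem_pi, Set.mem_univ, forall_true_left, hW_def,
        Set.mem_setOf_eq, pv, Zv, θv, pLt, pEq]
      constructor
      · intro h k
        rw [← hp k ω]
        exact h k
      · intro h k
        rw [hp k ω]
        exact h k
    have hstep2 : μ.map (fun ω => (Zv ω, θv ω)) W = ∫⁻ z, ∏ k, F z k (s k) ∂ν := by
      rw [hpair, hθpi, Measure.prod_apply hW]
      apply lintegral_congr
      intro z
      have hsec : Prod.mk z ⁻¹' W = Set.pi Set.univ (fun k => {x : ℝ |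
          ((pLt z k : ℝ) + x * (pEq z k : ℝ)) / (((k : ℕ) : ℝ) + 1) ∈ s k}) := by
        ext u
        simp [hW_def, Set.mem_pi]
      rw [hsec, Measure.pi_pi]
      refine Finset.prod_congr rfl fun k _ => ?_
      have hmeask : MeasurableSet {x : ℝ |
          ((pLt z k : ℝ) + x * (pEq z k : ℝ)) / (((k : ℕ) : ℝ) + 1) ∈ s k} := by
        have hm : Measurable fun x : ℝ =>
            ((pLt z k : ℝ) + x * (pEq z k : ℝ)) / (((k : ℕ) : ℝ) + 1) :=
          (measurable_const.add (measurable_id.mul_const _)).div_const _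
        exact hm (hs k)
      rw [Measure.restrict_apply hmeask]
      rfl
    have hcomp : ∀ σ : Equiv.Perm (Fin n), Measurable fun z : Fin n → ℝ => z ∘ σ :=
      fun σ => measurable_pi_lambda _ (fun i => measurable_pi_apply (σ i))
    have hinv : ∀ σ : Equiv.Perm (Fin n),
        (∫⁻ z, ∏ k, F z k (s k) ∂ν) = ∫⁻ z, ∏ k, F (z ∘ σ) k (s k) ∂ν := by
      intro σ
      have hmapσ : ν.map (fun z : Fin n → ℝ => z ∘ σ) = ν := by
        have hce : (fun z : Fin n → ℝ => z ∘ ⇑σ) ∘ Zv = fun ω i => Z (σ i) ω := rfl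
        rw [hν_def, Measure.map_map (hcomp σ) hZv, hce]
        exact hexch σ
      conv_lhs => rw [← hmapσ]
      rw [lintegral_map hf (hcomp σ)]
    have havg : (n.factorial : ℝ≥0∞) * (∫⁻ z, ∏ k, F z k (s k) ∂ν)
        = (n.factorial : ℝ≥0∞) * ∏ k, volume (s k ∩ Set.Ioo 0 1) := by
      have e1 : (n.factorial : ℝ≥0∞) * (∫⁻ z, ∏ k, F z k (s k) ∂ν)
          = ∑ _σ : Equiv.Perm (Fin n), ∫⁻ z, ∏ k, F z k (s k) ∂ν := by
        rw [Finset.sum_const, Finset.card_univ, Fintype.card_perm, Fintype.card_fin,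
          nsmul_eq_mul]
      have e2 : (∑ _σ : Equiv.Perm (Fin n), ∫⁻ z, ∏ k, F z k (s k) ∂ν)
          = ∑ σ : Equiv.Perm (Fin n), ∫⁻ z, ∏ k, F (z ∘ σ) k (s k) ∂ν :=
        Finset.sum_congr rfl fun σ _ => hinv σ
      have e3 : (∑ σ : Equiv.Perm (Fin n), ∫⁻ z, ∏ k, F (z ∘ σ) k (s k) ∂ν)
          = ∫⁻ z, ∑ σ : Equiv.Perm (Fin n), ∏ k, F (z ∘ σ) k (s k) ∂ν :=
        (lintegral_finset_sum _ fun σ _ => hf.comp (hcomp σ)).symm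
      have e4 : (∫⁻ z, ∑ σ : Equiv.Perm (Fin n), ∏ k, F (z ∘ σ) k (s k) ∂ν)
          = ∫⁻ _z, (n.factorial : ℝ≥0∞) * ∏ k, volume (s k ∩ Set.Ioo 0 1) ∂ν :=
        lintegral_congr fun z => main_sum_F n z s hs
      have e5 : (∫⁻ _z : Fin n → ℝ, (n.factorial : ℝ≥0∞) *
            ∏ k, volume (s k ∩ Set.Ioo 0 1) ∂ν)
          = (n.factorial : ℝ≥0∞) * ∏ k, volume (s k ∩ Set.Ioo 0 1) := by
        rw [lintegral_const, measure_univ, mul_one]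
      rw [e1, e2, e3, e4, e5]
    have hfac0 : (n.factorial : ℝ≥0∞) ≠ 0 := by
      exact_mod_cast n.factorial_pos.ne'
    have hfacT : (n.factorial : ℝ≥0∞) ≠ ⊤ := ENNReal.natCast_ne_top _
    rw [hstep1, hstep2]
    exact (ENNReal.mul_right_inj hfac0 hfacT).1 havg
  -- joint law is the product of uniforms
  have hmap_pv : μ.map pv
      = Measure.pi (fun _ : Fin n => volume.restrict (Set.Ioo (0:ℝ) 1)) := by
    refine (Measure.pi_eq fun s hs => ?_).symm
    rw [key s hs]
    exact Finset.prod_congr rfl fun k _ => (Measure.restrict_apply (hs k)).symm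
  -- marginals
  have hmarg : ∀ k, μ.map (p k) = volume.restrict (Set.Ioo (0:ℝ) 1) := by
    intro k
    have h1 : μ.map (p k) = (μ.map pv).map (fun v : Fin n → ℝ => v k) := by
      rw [Measure.map_map (measurable_pi_apply k) hpv]
      rfl
    rw [h1, hmap_pv]
    ext A hA
    rw [Measure.map_apply (measurable_pi_apply k) hA]
    have hpre : (fun v : Fin n → ℝ => v k) ⁻¹' A
        = Set.pi Set.univ (Function.update (fun _ : Fin n => (Set.univ : Set ℝ)) k A) :=
      Set.eval_preimage
    rw [hpre, Measure.pi_pi]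
    rw [Finset.prod_eq_single_of_mem k (Finset.mem_univ k)
      (fun j _ hj => by rw [Function.update_of_ne hj]; exact measure_univ)]
    rw [Function.update_self]
  refine ⟨?_, hmarg⟩
  -- independence
  rw [iIndepFun_iff_measure_inter_preimage_eq_mul]
  intro S sets hsets
  set s' : Fin n → Set ℝ := fun i => if i ∈ S then sets i else Set.univ with hs'_def
  have hs'meas : ∀ i, MeasurableSet (s' i) := by
    intro i
    by_cases h : i ∈ S
    · simpa [s', h] using hsets i h
    · simp [s', h]
  have hpre : (⋂ i ∈ S, p i ⁻¹' sets i) = pv ⁻¹' Set.pi Set.univ s' := by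
    ext ω
    simp only [Set.mem_iInter, Set.mem_preimage, Set.mem_pi, Set.mem_univ, forall_true_left,
      s', pv]
    constructor
    · intro h i
      by_cases hi : i ∈ S
      · rw [if_pos hi]
        exact h i hi
      · rw [if_neg hi]
        trivial
    · intro h i hi
      have := h i
      rwa [if_pos hi] at this
  rw [hpre, ← Measure.map_apply hpv (MeasurableSet.univ_pi hs'meas), hmap_pv, Measure.pi_pi]
  have hfinal : ∀ i ∈ S, (volume.restrict (Set.Ioo (0:ℝ) 1)) (s' i) = μ (p i ⁻¹' sets i) := by
    intro i hi
    rw [← Measure.map_apply (hpk i) (hsets i hi), hmarg i]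
    simp only [s', if_pos hi]
  rw [← Finset.prod_subset (Finset.subset_univ S) (fun i _ hi => by
    simp only [s', if_neg hi]
    exact measure_univ)]
  exact Finset.prod_congr rfl hfinal
end
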